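/- Let 0 < s < 1 and 1 < p < ∞. An open set ∅ ≠ G ⊊ ℝⁿ admits an (s,p)-Hardy inequality if and only if there is a constant C > 0 such that ∫_K dist(x,∂G)^{−sp} dx ≤ C · cap_{s,p}(K,G) for every compact set K ⊂ G. -/

import Mathlib

open MeasureTheory Metric
open scoped ENNReal

/-- The `p`-th power of the fractional Sobolev seminorm,
`∫_G ∫_G |f x − f y|^p / |x − y|^{n + s p} dy dx`. -/
noncomputable def fracEnergy {n : ℕ} (G : Set (EuclideanSpace ℝ (Fin n))) (s p : ℝ)
    (f : EuclideanSpace ℝ (Fin n) → ℝ) : ℝ≥0∞ :=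
  ∫⁻ x in G, ∫⁻ y in G, ENNReal.ofReal (|f x - f y| ^ p / dist x y ^ ((n : ℝ) + s * p))

/-- `G` admits an `(s,p)`-Hardy inequality: there is `C > 0` with
`∫_G |f(x)|^p dist(x,∂G)^{-sp} dx ≤ C ∫_G ∫_G |f(x) − f(y)|^p / |x−y|^{n+sp} dy dx`
for all `f ∈ C_c(G)`. -/
def AdmitsHardy {n : ℕ} (G : Set (EuclideanSpace ℝ (Fin n))) (s p : ℝ) : Prop :=
  ∃ C : ℝ, 0 < C ∧
    ∀ f : EuclideanSpace ℝ (Fin n) → ℝ,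
      Continuous f → HasCompactSupport f → tsupport f ⊆ G →
      (∫⁻ x in G,
          ENNReal.ofReal (|f x| ^ p * Metric.infDist x (frontier G) ^ (-(s * p)))) ≤
        ENNReal.ofReal C * fracEnergy G s p f

/-- The fractional `(s,p)`-capacity
`cap_{s,p}(K,G) = inf { |u|_{W^{s,p}(G)}^p : u ∈ C_c(G), u ≥ 1 on K }`. -/
noncomputable def fracCapacity {n : ℕ} (G : Set (EuclideanSpace ℝ (Fin n))) (s p : ℝ)
    (K : Set (EuclideanSpace ℝ (Fin n))) : ℝ≥0∞ :=
  ⨅ u : {u : EuclideanSpace ℝ (Fin n) → ℝ //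
      Continuous u ∧ HasCompactSupport u ∧ tsupport u ⊆ G ∧ ∀ x ∈ K, 1 ≤ u x},
    fracEnergy G s p u

/-!
If the Hardy inequality holds, applying it to any admissible `u ≥ 1` on `K` bounds the weighted
measure of `K` by `C` times the energy of `u`, hence by `C cap(K)`.

Conversely, cut `|f|` into the dyadic slabs `f_j = min(|f|, 2^j) - min(|f|, 2^(j-1))`. The function
`2^(1-j) f_j` is admissible for the level set `{|f| ≥ 2^j}`, so the Maz'ya condition bounds the
weighted measure of that level set by `C 2^((1-j)p) E(f_j)`. On the other hand the slabs of two
values telescope, so `∑_j |f_j(x) - f_j(y)|^p ≤ |f(x) - f(y)|^p` and `∑_j E(f_j) ≤ E(f)`.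
Since `|f|^p ≤ 2^((j+1)p)` where `2^j ≤ |f| < 2^(j+1)`, summing over `j` gives the Hardy
inequality with constant `4^p C`.
-/

theorem Finset.sum_rpow_le_rpow_sum {ι : Type*} (T : Finset ι) {x : ι → ℝ}
    (hx : ∀ j ∈ T, 0 ≤ x j) {p : ℝ} (hp : 1 ≤ p) :
    ∑ j ∈ T, x j ^ p ≤ (∑ j ∈ T, x j) ^ p := by
  induction T using Finset.cons_induction with
  | empty => simp [Real.zero_rpow (by linarith : p ≠ 0)]
  | cons a T _ ih =>
    rw [Finset.forall_mem_cons] at hx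
    rw [Finset.sum_cons, Finset.sum_cons]
    calc x a ^ p + ∑ j ∈ T, x j ^ p ≤ x a ^ p + (∑ j ∈ T, x j) ^ p := by gcongr; exact ih hx.2
      _ ≤ (x a + ∑ j ∈ T, x j) ^ p :=
        Real.add_rpow_le_rpow_add hx.1 (Finset.sum_nonneg hx.2) hp

theorem Monotone.sum_sub_pred_le {φ : ℤ → ℝ} (hφ : Monotone φ) {L : ℝ} (hL : ∀ j, L ≤ φ j)
    (T : Finset ℤ) {M : ℤ} (hM : ∀ j ∈ T, j ≤ M) :
    ∑ j ∈ T, (φ j - φ (j - 1)) ≤ φ M - L := by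
  induction T using Finset.induction_on_max generalizing M with
  | empty => simpa using hL M
  | insert a T hlt ih =>
    rw [Finset.sum_insert fun h => (hlt a h).false]
    have hT : ∑ j ∈ T, (φ j - φ (j - 1)) ≤ φ (a - 1) - L :=
      ih fun j hj => Int.le_sub_one_of_lt (hlt j hj)
    linarith [hφ (hM a (Finset.mem_insert_self a T))]

noncomputable def dyadicTrunc (j : ℤ) (t : ℝ) : ℝ :=
  min t (2 ^ j) - min t (2 ^ (j - 1))

theorem continuous_dyadicTrunc (j : ℤ) : Continuous (dyadicTrunc j) := by
  unfold dyadicTrunc; fun_prop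

theorem dyadicTrunc_of_nonpos (j : ℤ) {t : ℝ} (ht : t ≤ 0) : dyadicTrunc j t = 0 := by
  have h1 : t ≤ 2 ^ j := ht.trans (by positivity)
  have h2 : t ≤ 2 ^ (j - 1) := ht.trans (by positivity)
  simp [dyadicTrunc, h1, h2]

theorem dyadicTrunc_of_le {j : ℤ} {t : ℝ} (ht : 2 ^ j ≤ t) : dyadicTrunc j t = 2 ^ (j - 1) := by
  have h : (2 : ℝ) ^ (j - 1) ≤ 2 ^ j := zpow_le_zpow_right₀ one_le_two (by omega)
  rw [dyadicTrunc, min_eq_right ht, min_eq_right (h.trans ht), zpow_sub_one₀ two_ne_zero]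
  ring

theorem sum_abs_dyadicTrunc_sub_le (a b : ℝ) (T : Finset ℤ) :
    ∑ j ∈ T, |dyadicTrunc j a - dyadicTrunc j b| ≤ |a - b| := by
  wlog hba : b ≤ a generalizing a b
  · simpa only [abs_sub_comm] using this b a (le_of_not_ge hba)
  set φ : ℤ → ℝ := fun j => min a (2 ^ j) - min b (2 ^ j)
  have hφ : Monotone φ := fun i j hij => by
    have : (2 : ℝ) ^ i ≤ 2 ^ j := zpow_le_zpow_right₀ one_le_two hij
    simp only [φ, min_def]; split_ifs <;> linarith
  have hφ_nonneg : ∀ j, 0 ≤ φ j := fun j => sub_nonneg.2 (min_le_min_right _ hba)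
  have hφ_le : ∀ j, φ j ≤ a - b := fun j => by
    simp only [φ, min_def]; split_ifs <;> linarith
  have hincr : ∀ j, dyadicTrunc j a - dyadicTrunc j b = φ j - φ (j - 1) := fun j => by
    simp only [dyadicTrunc, φ]; ring
  obtain ⟨M, hM⟩ : ∃ M, ∀ j ∈ T, j ≤ M := T.bddAbove
  calc ∑ j ∈ T, |dyadicTrunc j a - dyadicTrunc j b| = ∑ j ∈ T, (φ j - φ (j - 1)) :=
        Finset.sum_congr rfl fun j _ => by
          rw [hincr, abs_of_nonneg (sub_nonneg.2 (hφ (by omega)))]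
    _ ≤ φ M - 0 := hφ.sum_sub_pred_le hφ_nonneg T hM
    _ ≤ |a - b| := by linarith [hφ_le M, le_abs_self (a - b)]

theorem sum_abs_dyadicTrunc_sub_rpow_le (a b : ℝ) (T : Finset ℤ) {p : ℝ} (hp : 1 ≤ p) :
    ∑ j ∈ T, |dyadicTrunc j a - dyadicTrunc j b| ^ p ≤ |a - b| ^ p :=
  (T.sum_rpow_le_rpow_sum (fun _ _ => abs_nonneg _) hp).trans <|
    Real.rpow_le_rpow (Finset.sum_nonneg fun _ _ => abs_nonneg _)
      (sum_abs_dyadicTrunc_sub_le a b T) (by linarith)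

theorem sum_lintegral_le_lintegral_sum {α ι : Type*} [MeasurableSpace α] {μ : Measure α}
    (T : Finset ι) (f : ι → α → ℝ≥0∞) :
    ∑ j ∈ T, ∫⁻ x, f j x ∂μ ≤ ∫⁻ x, ∑ j ∈ T, f j x ∂μ := by
  induction T using Finset.cons_induction with
  | empty => simp
  | cons a T _ ih =>
    simp only [Finset.sum_cons]
    exact (add_le_add le_rfl ih).trans (le_lintegral_add _ _)

section FracEnergy

variable {n : ℕ} {G : Set (EuclideanSpace ℝ (Fin n))} {s p : ℝ}

theorem fracEnergy_mono (hp : 0 ≤ p) {f g : EuclideanSpace ℝ (Fin n) → ℝ}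
    (h : ∀ x y, |g x - g y| ≤ |f x - f y|) : fracEnergy G s p g ≤ fracEnergy G s p f := by
  refine lintegral_mono fun x => lintegral_mono fun y => ENNReal.ofReal_le_ofReal ?_
  exact div_le_div_of_nonneg_right (Real.rpow_le_rpow (abs_nonneg _) (h x y) hp)
    (Real.rpow_nonneg dist_nonneg _)

theorem fracEnergy_const_mul {c : ℝ} (hc : 0 ≤ c) (g : EuclideanSpace ℝ (Fin n) → ℝ) :
    fracEnergy G s p (fun x => c * g x) = ENNReal.ofReal (c ^ p) * fracEnergy G s p g := by
  simp only [fracEnergy, ← lintegral_const_mul' _ _ ENNReal.ofReal_ne_top,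
    ← ENNReal.ofReal_mul (Real.rpow_nonneg hc _), ← mul_sub, abs_mul, abs_of_nonneg hc,
    Real.mul_rpow hc (abs_nonneg _), mul_div_assoc]

theorem sum_fracEnergy_le {ι : Type*} (T : Finset ι) {g : ι → EuclideanSpace ℝ (Fin n) → ℝ}
    {f : EuclideanSpace ℝ (Fin n) → ℝ}
    (h : ∀ x y, ∑ j ∈ T, |g j x - g j y| ^ p ≤ |f x - f y| ^ p) :
    ∑ j ∈ T, fracEnergy G s p (g j) ≤ fracEnergy G s p f := by
  refine (sum_lintegral_le_lintegral_sum T _).trans (lintegral_mono fun x => ?_)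
  refine (sum_lintegral_le_lintegral_sum T _).trans (lintegral_mono fun y => ?_)
  rw [← ENNReal.ofReal_sum_of_nonneg fun j _ => by positivity, ← Finset.sum_div]
  exact ENNReal.ofReal_le_ofReal <|
    div_le_div_of_nonneg_right (h x y) (Real.rpow_nonneg dist_nonneg _)

theorem tsum_fracEnergy_dyadicTrunc_le (hp : 1 ≤ p) (f : EuclideanSpace ℝ (Fin n) → ℝ) :
    ∑' j : ℤ, fracEnergy G s p (fun x => dyadicTrunc j |f x|) ≤ fracEnergy G s p f := by
  refine ENNReal.summable.tsum_le_of_sum_le fun T => ?_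
  calc ∑ j ∈ T, fracEnergy G s p (fun x => dyadicTrunc j |f x|)
      ≤ fracEnergy G s p (fun x => |f x|) :=
        sum_fracEnergy_le T fun x y => sum_abs_dyadicTrunc_sub_rpow_le _ _ T hp
    _ ≤ fracEnergy G s p f :=
        fracEnergy_mono (by linarith) fun x y => abs_abs_sub_abs_le_abs_sub (f x) (f y)

end FracEnergy

theorem lintegral_rpow_abs_mul_le_tsum {α : Type*} [MeasurableSpace α] (μ : Measure α)
    {F : α → ℝ} (hF : Measurable F) {w : α → ℝ≥0∞} (hw : Measurable w) {p : ℝ} (hp : 0 < p) :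
    ∫⁻ x, ENNReal.ofReal (|F x| ^ p) * w x ∂μ ≤
      ENNReal.ofReal (2 ^ p) *
        ∑' j : ℤ, ENNReal.ofReal ((2 ^ j) ^ p) * ∫⁻ x in {x | 2 ^ j ≤ |F x|}, w x ∂μ := by
  set E : ℤ → Set α := fun j => {x | (2 : ℝ) ^ j ≤ |F x|}
  have hE : ∀ j, MeasurableSet (E j) := fun j => measurableSet_le measurable_const hF.abs
  have hpt : ∀ x, ENNReal.ofReal (|F x| ^ p) * w x ≤
      ENNReal.ofReal (2 ^ p) * ∑' j : ℤ, ENNReal.ofReal ((2 ^ j) ^ p) * (E j).indicator w x := by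
    intro x
    rcases (abs_nonneg (F x)).eq_or_lt with h0 | h0
    · simp [← h0, Real.zero_rpow hp.ne']
    obtain ⟨k, hk, hk'⟩ := exists_mem_Ico_zpow h0 one_lt_two
    calc ENNReal.ofReal (|F x| ^ p) * w x
        ≤ ENNReal.ofReal (2 ^ p) * (ENNReal.ofReal ((2 ^ k) ^ p) * (E k).indicator w x) := by
          rw [Set.indicator_of_mem (show x ∈ E k from hk), ← mul_assoc, ← ENNReal.ofReal_mul (by positivity),
            ← Real.mul_rpow (by positivity) (by positivity), ← zpow_one_add₀ two_ne_zero,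
            add_comm]
          gcongr
      _ ≤ _ := by gcongr; exact ENNReal.le_tsum k
  calc ∫⁻ x, ENNReal.ofReal (|F x| ^ p) * w x ∂μ
      ≤ ∫⁻ x, ENNReal.ofReal (2 ^ p) *
          ∑' j : ℤ, ENNReal.ofReal ((2 ^ j) ^ p) * (E j).indicator w x ∂μ := lintegral_mono hpt
    _ = _ := by
      rw [lintegral_const_mul' _ _ ENNReal.ofReal_ne_top,
        lintegral_tsum fun j => ((hw.indicator (hE j)).const_mul _).aemeasurable]
      simp_rw [lintegral_const_mul' _ _ ENNReal.ofReal_ne_top, lintegral_indicator (hE _)]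
      rfl

section FracCapacity

variable {n : ℕ} {G : Set (EuclideanSpace ℝ (Fin n))} {s p : ℝ}

theorem fracCapacity_le_fracEnergy {K : Set (EuclideanSpace ℝ (Fin n))}
    {u : EuclideanSpace ℝ (Fin n) → ℝ} (hu : Continuous u) (huc : HasCompactSupport u)
    (huG : tsupport u ⊆ G) (huK : ∀ x ∈ K, 1 ≤ u x) :
    fracCapacity G s p K ≤ fracEnergy G s p u :=
  iInf_le_of_le ⟨u, hu, huc, huG, huK⟩ le_rfl

theorem le_mul_fracCapacity {K : Set (EuclideanSpace ℝ (Fin n))} {a c : ℝ≥0∞} (hc₀ : c ≠ 0)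
    (hc : c ≠ ∞)
    (h : ∀ u : EuclideanSpace ℝ (Fin n) → ℝ, Continuous u → HasCompactSupport u →
      tsupport u ⊆ G → (∀ x ∈ K, 1 ≤ u x) → a ≤ c * fracEnergy G s p u) :
    a ≤ c * fracCapacity G s p K := by
  rw [fracCapacity, ENNReal.mul_iInf_of_ne hc₀ hc]
  exact le_iInf fun u => h u.1 u.2.1 u.2.2.1 u.2.2.2.1 u.2.2.2.2

theorem zpow_rpow_mul_fracCapacity_le {f : EuclideanSpace ℝ (Fin n) → ℝ}
    (hf : Continuous f) (hfc : HasCompactSupport f) (hfG : tsupport f ⊆ G) (j : ℤ) :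
    ENNReal.ofReal ((2 ^ j) ^ p) * fracCapacity G s p {x | 2 ^ j ≤ |f x|} ≤
      ENNReal.ofReal (2 ^ p) * fracEnergy G s p (fun x => dyadicTrunc j |f x|) := by
  set φ : ℝ → ℝ := fun t => 2 ^ (1 - j) * dyadicTrunc j |t|
  have hφ0 : φ 0 = 0 := by simp [φ, dyadicTrunc_of_nonpos]
  have hcap : fracCapacity G s p {x | 2 ^ j ≤ |f x|} ≤ fracEnergy G s p (φ ∘ f) := by
    refine fracCapacity_le_fracEnergy ?_ (hfc.comp_left hφ0)
      ((tsupport_comp_subset hφ0 f).trans hfG) fun x hx => ?_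
    · exact continuous_const.mul ((continuous_dyadicTrunc j).comp hf.abs)
    · simp only [Function.comp_apply, φ, dyadicTrunc_of_le hx]
      rw [← zpow_add₀ (two_ne_zero (α := ℝ))]
      simp
  calc ENNReal.ofReal ((2 ^ j) ^ p) * fracCapacity G s p {x | 2 ^ j ≤ |f x|}
      ≤ ENNReal.ofReal ((2 ^ j) ^ p) * fracEnergy G s p (φ ∘ f) := by gcongr
    _ = ENNReal.ofReal ((2 ^ j) ^ p) * ENNReal.ofReal ((2 ^ (1 - j)) ^ p) *
          fracEnergy G s p (fun x => dyadicTrunc j |f x|) := by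
      rw [mul_assoc, ← fracEnergy_const_mul (by positivity : (0 : ℝ) ≤ 2 ^ (1 - j))]; rfl
    _ = _ := by
      rw [← ENNReal.ofReal_mul (by positivity), ← Real.mul_rpow (by positivity) (by positivity),
        ← zpow_add₀ two_ne_zero]
      simp

end FracCapacity

section HardyMazya

variable {n : ℕ} {G : Set (EuclideanSpace ℝ (Fin n))} {s p : ℝ}

theorem isCompact_setOf_le_abs {f : EuclideanSpace ℝ (Fin n) → ℝ} (hf : Continuous f)
    (hfc : HasCompactSupport f) {c : ℝ} (hc : 0 < c) : IsCompact {x | c ≤ |f x|} :=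
  hfc.isCompact_preimage hf (isClosed_le continuous_const continuous_abs) (by simpa using hc)

theorem setOf_le_abs_subset_tsupport (f : EuclideanSpace ℝ (Fin n) → ℝ) {c : ℝ} (hc : 0 < c) :
    {x | c ≤ |f x|} ⊆ tsupport f := fun x hx =>
  subset_tsupport f fun h0 => by simp [h0] at hx; linarith

theorem mazya_of_admitsHardy (hp : 0 ≤ p) (h : AdmitsHardy G s p) :
    ∃ C : ℝ, 0 < C ∧
      ∀ K : Set (EuclideanSpace ℝ (Fin n)), IsCompact K → K ⊆ G →
        (∫⁻ x in K, ENNReal.ofReal (infDist x (frontier G) ^ (-(s * p)))) ≤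
          ENNReal.ofReal C * fracCapacity G s p K := by
  obtain ⟨C, hC, hHardy⟩ := h
  refine ⟨C, hC, fun K hK hKG => le_mul_fracCapacity (ENNReal.ofReal_pos.2 hC).ne'
    ENNReal.ofReal_ne_top fun u hu huc huG huK => ?_⟩
  calc (∫⁻ x in K, ENNReal.ofReal (infDist x (frontier G) ^ (-(s * p))))
      ≤ ∫⁻ x in K, ENNReal.ofReal (|u x| ^ p * infDist x (frontier G) ^ (-(s * p))) := by
        refine setLIntegral_mono' hK.measurableSet fun x hx => ENNReal.ofReal_le_ofReal ?_
        exact le_mul_of_one_le_left (Real.rpow_nonneg infDist_nonneg _)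
          (Real.one_le_rpow ((huK x hx).trans (le_abs_self _)) hp)
    _ ≤ ∫⁻ x in G, ENNReal.ofReal (|u x| ^ p * infDist x (frontier G) ^ (-(s * p))) :=
        lintegral_mono_set hKG
    _ ≤ ENNReal.ofReal C * fracEnergy G s p u := hHardy u hu huc huG

theorem admitsHardy_of_mazya (hp : 1 < p) {C : ℝ} (hC : 0 < C)
    (hMazya : ∀ K : Set (EuclideanSpace ℝ (Fin n)), IsCompact K → K ⊆ G →
      (∫⁻ x in K, ENNReal.ofReal (infDist x (frontier G) ^ (-(s * p)))) ≤
        ENNReal.ofReal C * fracCapacity G s p K) :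
    AdmitsHardy G s p := by
  refine ⟨2 ^ p * C * 2 ^ p, by positivity, fun f hf hfc hfG => ?_⟩
  set w : EuclideanSpace ℝ (Fin n) → ℝ≥0∞ :=
    fun x => ENNReal.ofReal (infDist x (frontier G) ^ (-(s * p)))
  have hw : Measurable w := by fun_prop
  have hlevel : ∀ j : ℤ, ENNReal.ofReal ((2 ^ j) ^ p) * ∫⁻ x in {x | 2 ^ j ≤ |f x|}, w x ≤
      ENNReal.ofReal C * (ENNReal.ofReal (2 ^ p) *
        fracEnergy G s p (fun x => dyadicTrunc j |f x|)) := fun j => by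
    have hpos : (0 : ℝ) < 2 ^ j := by positivity
    grw [hMazya _ (isCompact_setOf_le_abs hf hfc hpos)
      ((setOf_le_abs_subset_tsupport f hpos).trans hfG), mul_left_comm,
      zpow_rpow_mul_fracCapacity_le hf hfc hfG j]
  calc (∫⁻ x in G, ENNReal.ofReal (|f x| ^ p * infDist x (frontier G) ^ (-(s * p))))
      = ∫⁻ x in G, ENNReal.ofReal (|f x| ^ p) * w x := by
        simp_rw [w, ENNReal.ofReal_mul (Real.rpow_nonneg (abs_nonneg _) _)]
    _ ≤ ∫⁻ x, ENNReal.ofReal (|f x| ^ p) * w x := setLIntegral_le_lintegral _ _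
    _ ≤ ENNReal.ofReal (2 ^ p) *
          ∑' j : ℤ, ENNReal.ofReal ((2 ^ j) ^ p) * ∫⁻ x in {x | 2 ^ j ≤ |f x|}, w x :=
        lintegral_rpow_abs_mul_le_tsum _ hf.measurable hw (by linarith)
    _ ≤ ENNReal.ofReal (2 ^ p) * ∑' j : ℤ, ENNReal.ofReal C * (ENNReal.ofReal (2 ^ p) *
          fracEnergy G s p (fun x => dyadicTrunc j |f x|)) :=
        mul_le_mul_right (ENNReal.tsum_le_tsum hlevel) _
    _ = ENNReal.ofReal (2 ^ p * C * 2 ^ p) *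
          ∑' j : ℤ, fracEnergy G s p (fun x => dyadicTrunc j |f x|) := by
        rw [ENNReal.tsum_mul_left, ENNReal.tsum_mul_left, ENNReal.ofReal_mul (by positivity),
          ENNReal.ofReal_mul (by positivity)]
        ring
    _ ≤ ENNReal.ofReal (2 ^ p * C * 2 ^ p) * fracEnergy G s p f := by
        grw [tsum_fracEnergy_dyadicTrunc_le hp.le]

end HardyMazya

theorem hardy_iff_mazya_general (n : ℕ) (s p : ℝ) (hp : 1 < p)
    (G : Set (EuclideanSpace ℝ (Fin n))) :
    AdmitsHardy G s p ↔
      ∃ C : ℝ, 0 < C ∧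
        ∀ K : Set (EuclideanSpace ℝ (Fin n)), IsCompact K → K ⊆ G →
          (∫⁻ x in K, ENNReal.ofReal (Metric.infDist x (frontier G) ^ (-(s * p)))) ≤
            ENNReal.ofReal C * fracCapacity G s p K :=
  ⟨mazya_of_admitsHardy (by linarith), fun ⟨_, hC, hMazya⟩ => admitsHardy_of_mazya hp hC hMazya⟩

/-- **Theorem 4.2 (Maz'ya-type characterization).** Let `0 < s < 1` and `1 < p < ∞`.
An open set `∅ ≠ G ⊊ ℝⁿ` admits an `(s,p)`-Hardy inequality if and only if there is `C > 0`
such that `∫_K dist(x,∂G)^{-sp} dx ≤ C ⋅ cap_{s,p}(K,G)` for every compact `K ⊆ G`. -/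
theorem hardy_iff_mazya (n : ℕ) (s p : ℝ) (hs : 0 < s) (hs1 : s < 1) (hp : 1 < p)
    (G : Set (EuclideanSpace ℝ (Fin n))) (hG : IsOpen G) (hne : G.Nonempty)
    (hGuniv : G ≠ Set.univ) :
    AdmitsHardy G s p ↔
      ∃ C : ℝ, 0 < C ∧
        ∀ K : Set (EuclideanSpace ℝ (Fin n)), IsCompact K → K ⊆ G →
          (∫⁻ x in K, ENNReal.ofReal (Metric.infDist x (frontier G) ^ (-(s * p)))) ≤
            ENNReal.ofReal C * fracCapacity G s p K :=
  hardy_iff_mazya_general n s p hp G
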